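/- Let h : ℝ → ℝ be a nonnegative even Schwartz function with ∫ h = 1, and let L = L(T) satisfy 1 ≤ L ≤ T^{1/2} for T ≥ 1. Define h_T(r) = (1/2)h((r−T)/L) + (1/2)h((r+T)/L). Then ∫_{−∞}^{∞} r·tanh(r)·h_T(r) dr = L·T + O(L²·T^{-1/2} + 1) as T → ∞ (in particular it equals L·T + O(1) under the additional hypothesis L = o(T^{1/8}) using ∫ r h(r) dr = 0). -/

import Mathlib

/-!
Substituting `r = T + L u` in the first bump and `r = -(T + L u)` in the mirrored one (both `h`
and `r tanh r` are even) turns the integral into `L ∫ (T + L u) tanh (T + L u) h(u) du`. With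
`tanh` replaced by `1` this is exactly `L T`, since `∫ h = 1` and `∫ u h(u) du = 0`. Where
`x = T + L u ≥ T/2`, the error `x (1 - tanh x)` is at most `1/x ≤ 2/T`. Elsewhere `2 L |u| > T`,
so the crude bound `2 |x| ≤ 6 L |u|` may be multiplied by `(2 L |u| / T)²` and paid for by the
third moment of `h`. After the factor `L` the total error is `O(L/T + L⁴/T²) = O(1)`, as `L² ≤ T`.
-/

open MeasureTheory

namespace Real

theorem continuous_tanh : Continuous tanh := by
  simp_rw [funext tanh_eq_sinh_div_cosh]
  exact continuous_sinh.div continuous_cosh fun x => (cosh_pos x).ne'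

theorem abs_tanh_sub_one_le_two (x : ℝ) : |tanh x - 1| ≤ 2 := by
  have := abs_tanh_lt_one x
  rw [abs_lt] at this
  rw [abs_le]
  constructor <;> linarith

theorem mul_one_sub_tanh_le_inv {x : ℝ} (hx : 0 < x) : x * (1 - tanh x) ≤ x⁻¹ := by
  have hexp : exp x * exp (-x) = 1 := by rw [← exp_add, add_neg_cancel, exp_zero]
  have hsq : exp (2 * x) = exp x ^ 2 := by rw [← exp_nat_mul]; ring_nf
  -- `2 x² ≤ e^{2x} + 1` is the whole content once `tanh` is written out
  have hquad := quadratic_le_exp_of_nonneg (by positivity : 0 ≤ 2 * x)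
  have := exp_pos x
  have := exp_pos (-x)
  rw [tanh_eq]
  field_simp
  nlinarith

theorem abs_shift_mul_tanh_sub_one_le {T L : ℝ} (hT : 0 < T) (hL : 0 ≤ L) (u : ℝ) :
    |(T + L * u) * (tanh (T + L * u) - 1)| ≤ 2 / T + 24 * L ^ 3 / T ^ 2 * |u| ^ 3 := by
  have htail : 0 ≤ 24 * L ^ 3 / T ^ 2 * |u| ^ 3 := by positivity
  set x := T + L * u with hx
  by_cases hnear : -(T / 2) ≤ L * u
  · have hxT : T / 2 ≤ x := by linarith
    have hx0 : 0 < x := by linarith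
    rw [abs_mul, abs_of_pos hx0, abs_of_neg (by linarith [tanh_lt_one x]), neg_sub]
    calc x * (1 - tanh x) ≤ x⁻¹ := mul_one_sub_tanh_le_inv hx0
      _ ≤ (T / 2)⁻¹ := inv_anti₀ (by positivity) hxT
      _ ≤ 2 / T + 24 * L ^ 3 / T ^ 2 * |u| ^ 3 := by rw [inv_div]; linarith
  · rw [not_le] at hnear
    have hfar : T ≤ 2 * L * |u| := by nlinarith [neg_abs_le u]
    have hxu : |x| ≤ 3 * (L * |u|) := by
      have := abs_add_le T (L * u)
      rw [abs_of_pos hT, abs_mul, abs_of_nonneg hL] at this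
      linarith
    have hratio : 1 ≤ (2 * L * |u| / T) ^ 2 := one_le_pow₀ ((one_le_div hT).2 hfar)
    calc |x * (tanh x - 1)| ≤ 3 * (L * |u|) * 2 := by
          rw [abs_mul]
          exact mul_le_mul hxu (abs_tanh_sub_one_le_two x) (abs_nonneg _) (by positivity)
      _ ≤ 6 * (L * |u|) * (2 * L * |u| / T) ^ 2 := by
          nlinarith [mul_le_mul_of_nonneg_left hratio (by positivity : 0 ≤ 6 * (L * |u|))]
      _ = 24 * L ^ 3 / T ^ 2 * |u| ^ 3 := by field_simp; ring
      _ ≤ 2 / T + 24 * L ^ 3 / T ^ 2 * |u| ^ 3 := by linarith [div_pos two_pos hT]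

end Real

theorem integral_mul_eq_zero_of_even {h : ℝ → ℝ} (heven : ∀ x, h (-x) = h x) :
    ∫ x, x * h x = 0 := by
  have hodd : ∫ x, x * h x = -∫ x, x * h x := by
    conv_lhs => rw [← integral_neg_eq_self]
    rw [← integral_neg]
    simp only [heven, neg_mul]
  linarith

theorem integral_mul_half_add_half_shift {g h : ℝ → ℝ} (hg : ∀ r, g (-r) = g r)
    (hh : ∀ x, h (-x) = h x) {T L : ℝ} (hL : 0 < L)
    (hgh : Integrable fun u => g (T + L * u) * h u) :
    ∫ r, g r * ((1 / 2) * h ((r - T) / L) + (1 / 2) * h ((r + T) / L)) =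
      L * ∫ u, g (T + L * u) * h u := by
  set F : ℝ → ℝ := fun u => g (T + L * u) * h u
  have hshift : ∀ r, g r * h ((r - T) / L) = F ((r - T) / L) := fun r => by
    simp only [F]; rw [mul_div_cancel₀ _ hL.ne', add_sub_cancel]
  have hmirror : ∀ r, g r * h ((r + T) / L) = F ((-r - T) / L) := fun r => by
    rw [← hshift, hg, show (-r - T) / L = -((r + T) / L) by ring, hh]
  have hFint : Integrable fun r => F ((r - T) / L) :=
    (hgh.comp_div hL.ne').comp_sub_right T
  calc ∫ r, g r * ((1 / 2) * h ((r - T) / L) + (1 / 2) * h ((r + T) / L))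
      = ∫ r, ((1 / 2) * F ((r - T) / L) + (1 / 2) * F ((-r - T) / L)) := by
        congr 1; ext r; rw [← hshift, ← hmirror]; ring
    _ = ∫ r, F ((r - T) / L) := by
        rw [integral_add (hFint.const_mul _) (hFint.comp_neg.const_mul _), integral_const_mul,
          integral_const_mul, integral_neg_eq_self (fun r => F ((r - T) / L))]
        ring
    _ = L * ∫ u, F u := by
        rw [integral_sub_right_eq_self (fun r => F (r / L)), Measure.integral_comp_div,
          smul_eq_mul, abs_of_pos hL]

theorem integrable_mul_tanh_mul {f h : ℝ → ℝ} (hf : Continuous f) (hh : Continuous h)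
    (hfh : Integrable fun u => f u * h u) :
    Integrable fun u => f u * Real.tanh (f u) * h u := by
  refine hfh.mono ((hf.mul (Real.continuous_tanh.comp hf)).mul hh).aestronglyMeasurable
    (Filter.Eventually.of_forall fun u => ?_)
  simp only [Real.norm_eq_abs, abs_mul]
  gcongr
  exact mul_le_of_le_one_right (abs_nonneg _) (Real.abs_tanh_lt_one _).le

theorem abs_integral_shift_mul_tanh_sub_one_le {h : ℝ → ℝ} (h0 : Integrable h)
    (h3 : Integrable fun u => ‖u‖ ^ 3 * ‖h u‖) {T L : ℝ} (hT : 0 < T) (hL : 0 ≤ L) :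
    |∫ u, (T + L * u) * (Real.tanh (T + L * u) - 1) * h u| ≤
      2 / T * (∫ u, ‖h u‖) + 24 * L ^ 3 / T ^ 2 * ∫ u, ‖u‖ ^ 3 * ‖h u‖ := by
  have hbound : Integrable fun u => 2 / T * ‖h u‖ + 24 * L ^ 3 / T ^ 2 * (‖u‖ ^ 3 * ‖h u‖) :=
    (h0.norm.const_mul _).add (h3.const_mul _)
  rw [← Real.norm_eq_abs]
  calc ‖∫ u, (T + L * u) * (Real.tanh (T + L * u) - 1) * h u‖
      ≤ ∫ u, (2 / T * ‖h u‖ + 24 * L ^ 3 / T ^ 2 * (‖u‖ ^ 3 * ‖h u‖)) :=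
        norm_integral_le_of_norm_le hbound (Filter.Eventually.of_forall fun u => ?_)
    _ = 2 / T * (∫ u, ‖h u‖) + 24 * L ^ 3 / T ^ 2 * ∫ u, ‖u‖ ^ 3 * ‖h u‖ := by
        rw [integral_add (h0.norm.const_mul _) (h3.const_mul _), integral_const_mul,
          integral_const_mul]
  rw [norm_mul, Real.norm_eq_abs (_ * _), Real.norm_eq_abs u]
  nlinarith [Real.abs_shift_mul_tanh_sub_one_le hT hL u, norm_nonneg (h u)]

namespace SchwartzMap

theorem integrable_affine_mul (h : SchwartzMap ℝ ℝ) (a b : ℝ) :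
    Integrable fun u => (a + b * u) * h u := by
  have h1 : Integrable fun u => u * h u :=
    (h.integrable_pow_mul volume 1).mono (continuous_id.mul h.continuous).aestronglyMeasurable
      (Filter.Eventually.of_forall fun u => by simp)
  refine ((h.integrable.const_mul a).add (h1.const_mul b)).congr
    (Filter.Eventually.of_forall fun u => ?_)
  simp only [Pi.add_apply]
  ring

theorem integral_affine_mul_of_even (h : SchwartzMap ℝ ℝ) (heven : ∀ x, h (-x) = h x)
    (a b : ℝ) : ∫ u, (a + b * u) * h u = a * ∫ u, h u := by
  have h1 : Integrable fun u => u * h u := by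
    simpa using h.integrable_affine_mul 0 1
  simp only [add_mul, mul_assoc]
  rw [integral_add (h.integrable.const_mul a) (h1.const_mul b), integral_const_mul,
    integral_const_mul, integral_mul_eq_zero_of_even heven, mul_zero, add_zero]

theorem integral_shift_mul_tanh_mul_eq (h : SchwartzMap ℝ ℝ) (heven : ∀ x, h (-x) = h x)
    (hint : ∫ x, h x = 1) (T L : ℝ) :
    ∫ u, (T + L * u) * Real.tanh (T + L * u) * h u =
      T + ∫ u, (T + L * u) * (Real.tanh (T + L * u) - 1) * h u := by
  have hA := h.integrable_affine_mul T L
  simp only [mul_sub, sub_mul, mul_one]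
  rw [integral_sub (integrable_mul_tanh_mul (by fun_prop) h.continuous hA) hA,
    h.integral_affine_mul_of_even heven, hint]
  ring

end SchwartzMap

theorem stmt4_general (h : SchwartzMap ℝ ℝ)
    (heven : ∀ x, h (-x) = h x) (hint : ∫ x : ℝ, h x = 1) :
    ∃ C : ℝ, ∀ T L : ℝ, 1 ≤ T → 1 ≤ L → L ≤ T ^ ((1:ℝ)/2) →
      |(∫ r : ℝ, r * Real.tanh r *
          ((1/2) * h ((r - T) / L) + (1/2) * h ((r + T) / L))) - L * T|
        ≤ C * (L ^ 2 * T ^ (-(1:ℝ)/2) + 1) := by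
  set N := ∫ u, ‖h u‖
  set M := ∫ u, ‖u‖ ^ 3 * ‖h u‖
  have hN : 0 ≤ N := integral_nonneg fun u => norm_nonneg _
  have hM : 0 ≤ M := integral_nonneg fun u => by positivity
  refine ⟨2 * N + 24 * M, fun T L hT hL hLT => ?_⟩
  have hT0 : 0 < T := by linarith
  have hL2T : L ^ 2 ≤ T := by
    rw [← Real.sqrt_eq_rpow] at hLT
    simpa [Real.sq_sqrt hT0.le] using pow_le_pow_left₀ (by linarith) hLT 2
  have hsym := integral_mul_half_add_half_shift (g := fun r => r * Real.tanh r)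
    (fun r => by simp [Real.tanh_neg]) heven (by linarith : 0 < L)
    (integrable_mul_tanh_mul (by fun_prop) h.continuous (h.integrable_affine_mul T L))
  have herr := abs_integral_shift_mul_tanh_sub_one_le h.integrable
    (h.integrable_pow_mul volume 3) hT0 (by linarith : 0 ≤ L)
  rw [hsym, h.integral_shift_mul_tanh_mul_eq heven hint, mul_add, add_sub_cancel_left, abs_mul,
    abs_of_pos (by linarith : 0 < L)]
  calc L * |∫ u, (T + L * u) * (Real.tanh (T + L * u) - 1) * h u|
      ≤ L * (2 / T * N + 24 * L ^ 3 / T ^ 2 * M) := mul_le_mul_of_nonneg_left herr (by linarith)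
    _ = 2 * (L / T) * N + 24 * (L ^ 4 / T ^ 2) * M := by ring
    _ ≤ 2 * 1 * N + 24 * 1 * M := by
        gcongr
        · exact (div_le_one hT0).2 (by nlinarith)
        · exact (div_le_one (by positivity)).2 (by nlinarith)
    _ ≤ (2 * N + 24 * M) * (L ^ 2 * T ^ (-(1:ℝ)/2) + 1) := by
        rw [mul_one, mul_one]
        exact le_mul_of_one_le_right (by positivity) (le_add_of_nonneg_left (by positivity))

theorem stmt4 (h : SchwartzMap ℝ ℝ) (hpos : ∀ x, 0 ≤ h x)
    (heven : ∀ x, h (-x) = h x) (hint : ∫ x : ℝ, h x = 1) :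
    ∃ C : ℝ, ∀ T L : ℝ, 1 ≤ T → 1 ≤ L → L ≤ T ^ ((1:ℝ)/2) →
      |(∫ r : ℝ, r * Real.tanh r *
          ((1/2) * h ((r - T) / L) + (1/2) * h ((r + T) / L))) - L * T|
        ≤ C * (L ^ 2 * T ^ (-(1:ℝ)/2) + 1) :=
  stmt4_general h heven hint
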